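/- In the three-player one-shot game where only player 1 moves, choosing between two actions a and b, with payoff vectors u(a) = (1,2,0) and u(b) = (1,0,2) to players 1, 2, 3 respectively: both strategy profiles (the one choosing a and the one choosing b) are secure equilibria, but the game has no strongly secure equilibrium. -/

import Mathlib

/-- The three players of the example game. -/
inductive ExPlayer : Type
  | one
  | two
  | three
deriving DecidableEq

instance : Fintype ExPlayer :=
  ⟨{ExPlayer.one, ExPlayer.two, ExPlayer.three}, fun x => by cases x <;> simp⟩

/-- Strategy sets: player 1 chooses between two actions (`Bool`, where `true` is
action `a` and `false` is action `b`); players 2 and 3 never move, so they have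
singleton strategy sets. -/
def ExStrat : ExPlayer → Type
  | .one => Bool
  | .two => PUnit
  | .three => PUnit

/-- Payoffs: if player 1 chooses `a` (`true`) the payoffs to players 1, 2, 3 are
`(1, 2, 0)`; if player 1 chooses `b` (`false`) they are `(1, 0, 2)`. -/
def exPay : ExPlayer → (∀ j, ExStrat j) → ℝ :=
  fun i σ =>
    match i, (σ ExPlayer.one : Bool) with
    | .one, _ => 1
    | .two, true => 2
    | .two, false => 0
    | .three, true => 0
    | .three, false => 2

/-- The strategy profile in which player 1 chooses action `a`. -/
def exProfA : ∀ j, ExStrat j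
  | .one => true
  | .two => PUnit.unit
  | .three => PUnit.unit

/-- The strategy profile in which player 1 chooses action `b`. -/
def exProfB : ∀ j, ExStrat j
  | .one => false
  | .two => PUnit.unit
  | .three => PUnit.unit

/-- Nash equilibrium in the example game. -/
def ExNash (σ : ∀ j, ExStrat j) : Prop :=
  ∀ (i : ExPlayer) (τi : ExStrat i), exPay i (Function.update σ i τi) ≤ exPay i σ

/-- Secure equilibrium in the example game. -/
def ExSecure (σ : ∀ j, ExStrat j) : Prop :=
  ExNash σ ∧
    ¬ ∃ (i : ExPlayer) (τi : ExStrat i),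
        exPay i (Function.update σ i τi) = exPay i σ ∧
        (∀ j : ExPlayer, j ≠ i → exPay j (Function.update σ i τi) ≤ exPay j σ) ∧
        (∃ k : ExPlayer, k ≠ i ∧ exPay k (Function.update σ i τi) < exPay k σ)

/-- Strongly secure equilibrium in the example game. -/
def ExStronglySecure (σ : ∀ j, ExStrat j) : Prop :=
  ExNash σ ∧
    ∀ (i : ExPlayer) (τi : ExStrat i),
      exPay i (Function.update σ i τi) = exPay i σ →
      ∀ j : ExPlayer, j ≠ i → exPay j σ ≤ exPay j (Function.update σ i τi)

lemma exPay_congr {σ σ' : ∀ j, ExStrat j} (h : σ' .one = σ .one) (i : ExPlayer) :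
    exPay i σ' = exPay i σ := by
  cases i <;> simp only [exPay, h]

lemma exPay_update_of_ne_one {i : ExPlayer} (hi : i ≠ .one) (σ : ∀ j, ExStrat j)
    (τi : ExStrat i) (j : ExPlayer) : exPay j (Function.update σ i τi) = exPay j σ :=
  exPay_congr (Function.update_of_ne hi.symm τi σ) j

lemma exPay_one (σ : ∀ j, ExStrat j) : exPay .one σ = 1 := rfl

lemma exPay_two_add_exPay_three (σ : ∀ j, ExStrat j) : exPay .two σ + exPay .three σ = 2 := by
  cases h : (σ .one : Bool) <;> simp only [exPay, h] <;> norm_num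

lemma exPay_lt_of_update_one_ne (σ : ∀ j, ExStrat j) {b : Bool} (hb : b ≠ σ .one) :
    exPay .two (Function.update σ .one b) < exPay .two σ ∨
      exPay .three (Function.update σ .one b) < exPay .three σ := by
  have hupd : (Function.update σ .one b .one : Bool) = b := Function.update_self _ _ _
  cases h : (σ .one : Bool) <;> cases b <;> simp_all [exPay]

lemma exNash (σ : ∀ j, ExStrat j) : ExNash σ := by
  intro i τi
  rcases eq_or_ne i .one with rfl | hi
  · simp only [exPay_one, le_refl]
  · rw [exPay_update_of_ne_one hi]

lemma exSecure (σ : ∀ j, ExStrat j) : ExSecure σ := by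
  refine ⟨exNash σ, ?_⟩
  rintro ⟨i, τi, -, hle, k, hki, hlt⟩
  rcases eq_or_ne i .one with rfl | hi
  · -- Players 2 and 3 share a constant total, so neither can lose unless the other gains.
    have h2 := hle .two (by decide)
    have h3 := hle .three (by decide)
    have hsum := exPay_two_add_exPay_three (Function.update σ .one τi)
    have hsum' := exPay_two_add_exPay_three σ
    cases k
    · exact absurd rfl hki
    · linarith
    · linarith
  · rw [exPay_update_of_ne_one hi] at hlt
    exact lt_irrefl _ hlt

lemma not_exStronglySecure (σ : ∀ j, ExStrat j) : ¬ ExStronglySecure σ := by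
  rintro ⟨-, hsafe⟩
  have hne : (!σ .one : Bool) ≠ σ .one := Bool.not_ne_self _
  have hsame : exPay .one (Function.update σ .one (!σ .one : Bool)) = exPay .one σ := rfl
  rcases exPay_lt_of_update_one_ne σ hne with h2 | h3
  · exact (hsafe .one _ hsame .two (by decide)).not_gt h2
  · exact (hsafe .one _ hsame .three (by decide)).not_gt h3

/-- **A game with secure equilibria but no strongly secure equilibrium**
(Remark 1): in the three-player one-shot game where only player 1 moves, with
payoff vectors `(1,2,0)` for action `a` and `(1,0,2)` for action `b`, both
strategy profiles are secure equilibria, but the game admits no strongly secure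
equilibrium. -/
theorem example_secure_but_no_strongly_secure :
    ExSecure exProfA ∧ ExSecure exProfB ∧ ¬ ∃ σ : ∀ j, ExStrat j, ExStronglySecure σ :=
  ⟨exSecure _, exSecure _, fun ⟨σ, h⟩ => not_exStronglySecure σ h⟩
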